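/- arXiv:2109.06622 — 3 statements merged into one kernel-verified Lean document; each statement's English description precedes it below -/
import Mathlib

section
/- In any optimal solution of the generalized flow linear program (P) (maximize z subject to: for each u ≠ t, outflow(u) − Σ_{b into u} π_b φ_b ≤ w_u; outflow(t) − Σ_{b into t} π_b φ_b = w_t − z; φ ≥ 0), sending ε > 0 units of flow along an st-path P' whose reliability (product of multipliers) is strictly smaller than that of a most reliable st-path P cannot occur: rerouting ε units from P' to P strictly increases the flow arriving at t, hence strictly increases z. Therefore any optimal solution routes, for every s ≠ t, its supply along most reliable st-paths only. -/
open scoped Classical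

def IsPath {V : Type*} (adj : V → V → Prop) : V → V → List V → Prop
  | _, _, [] => False
  | s, t, [a] => a = s ∧ a = t
  | s, t, a :: b :: p => a = s ∧ adj a b ∧ IsPath adj b t (b :: p)

noncomputable def pathRel {V : Type*} (π : V → V → ℝ) : List V → ℝ
  | [] => 1
  | [_] => 1
  | a :: b :: p => π a b * pathRel π (b :: p)

noncomputable def conn {V : Type*} (adj : V → V → Prop) (π : V → V → ℝ) (s t : V) : ℝ :=
  sSup ({x | ∃ p, IsPath adj s t p ∧ pathRel π p = x} ∪ {0})

section Paths

variable {V : Type*} {adj : V → V → Prop} {π : V → V → ℝ}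

theorem pathRel_mem_Icc_of_isPath (hπ : ∀ a b, adj a b → 0 < π a b ∧ π a b ≤ 1) :
    ∀ {p : List V} {s t : V}, IsPath adj s t p → pathRel π p ∈ Set.Icc 0 1
  | [], _, _, h => h.elim
  | [_], _, _, _ => by simp [pathRel]
  | a :: b :: p, _, _, ⟨_, hab, hp⟩ => by
    obtain ⟨h0, h1⟩ := pathRel_mem_Icc_of_isPath hπ hp
    rw [pathRel]
    exact ⟨mul_nonneg (hπ a b hab).1.le h0, mul_le_one₀ (hπ a b hab).2 h0 h1⟩

theorem pathRel_le_conn (hπ : ∀ a b, adj a b → 0 < π a b ∧ π a b ≤ 1) {s t : V} {p : List V}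
    (hp : IsPath adj s t p) : pathRel π p ≤ conn adj π s t := by
  refine le_csSup ⟨1, ?_⟩ (Or.inl ⟨p, hp, rfl⟩)
  rintro x (⟨q, hq, rfl⟩ | rfl)
  · exact (pathRel_mem_Icc_of_isPath hπ hq).2
  · exact zero_le_one

theorem exists_isPath_lt_pathRel_of_lt_conn {s t : V} {x : ℝ} (hx : 0 ≤ x)
    (h : x < conn adj π s t) : ∃ q, IsPath adj s t q ∧ x < pathRel π q := by
  obtain ⟨y, hy, hxy⟩ := exists_lt_of_lt_csSup
    (Set.union_nonempty.2 (Or.inr (Set.singleton_nonempty 0))) h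
  rcases hy with ⟨q, hq, rfl⟩ | rfl
  · exact ⟨q, hq, hxy⟩
  · exact absurd hxy hx.not_gt

end Paths

namespace Finsupp

variable {α : Type*}

noncomputable def reroute (f : α →₀ ℝ) (p q : α) : α →₀ ℝ :=
  f + single q (f p) - single p (f p)

theorem reroute_apply (f : α →₀ ℝ) (p q r : α) :
    reroute f p q r = f r + (if q = r then f p else 0) - (if p = r then f p else 0) := by
  simp [reroute, single_apply]

theorem reroute_nonneg {f : α →₀ ℝ} (hf : ∀ r, 0 ≤ f r) (p q r : α) : 0 ≤ reroute f p q r := by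
  rw [reroute_apply]
  have := hf r
  have := hf p
  split_ifs <;> subst_vars <;> linarith

theorem eq_or_ne_zero_of_reroute_ne_zero {f : α →₀ ℝ} {p q r : α} (h : reroute f p q r ≠ 0) :
    r = q ∨ f r ≠ 0 := by
  by_contra! ⟨hrq, hfr⟩
  rw [reroute_apply, if_neg (Ne.symm hrq)] at h
  split_ifs at h with hpr
  · subst hpr; simp [hfr] at h
  · simp [hfr] at h

theorem sum_mul_reroute (f : α →₀ ℝ) (p q : α) (c : α → ℝ) :
    ((reroute f p q).sum fun a y => y * c a) = (f.sum fun a y => y * c a) + f p * (c q - c p) := by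
  rw [reroute, sum_sub_index (fun _ _ _ => sub_mul _ _ _),
    sum_add_index' (fun _ => zero_mul _) (fun _ _ _ => add_mul _ _ _),
    sum_single_index (zero_mul _), sum_single_index (zero_mul _)]
  ring

theorem sum_reroute (f : α →₀ ℝ) (p q : α) :
    ((reroute f p q).sum fun _ y => y) = f.sum fun _ y => y := by
  simpa using sum_mul_reroute f p q 1

end Finsupp

theorem Fintype.sum_update_eq_add_sub {ι M : Type*} [Fintype ι] [DecidableEq ι] [AddCommGroup M]
    (f : ι → M) (i : ι) (b : M) : ∑ x, Function.update f i b x = ∑ x, f x + (b - f i) := by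
  rw [Finset.sum_update_of_mem (Finset.mem_univ i), ← Finset.add_sum_erase _ _ (Finset.mem_univ i),
    Finset.sdiff_singleton_eq_erase]
  abel

/-- `(P)` in path-flow form: `g s` assigns flow amounts to `st`-paths, and the objective is the
flow arriving at `t`. -/
theorem stmt_2_general {V : Type*} [Fintype V] (adj : V → V → Prop) (π : V → V → ℝ) (w : V → ℝ)
    (hπ : ∀ a b, adj a b → 0 < π a b ∧ π a b ≤ 1) (t : V)
    (g : V → (List V →₀ ℝ))
    (hg0 : ∀ s p, 0 ≤ g s p)
    (hgpath : ∀ s p, g s p ≠ 0 → IsPath adj s t p)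
    (hsupply : ∀ s, ((g s).sum fun _ y => y) ≤ w s)
    (hopt : ∀ g' : V → (List V →₀ ℝ),
      (∀ s p, 0 ≤ g' s p) →
      (∀ s p, g' s p ≠ 0 → IsPath adj s t p) →
      (∀ s, ((g' s).sum fun _ y => y) ≤ w s) →
      (∑ s : V, (g' s).sum fun p y => y * pathRel π p)
        ≤ ∑ s : V, (g s).sum fun p y => y * pathRel π p) :
    ∀ s p, g s p ≠ 0 → pathRel π p = conn adj π s t := by
  intro s p hgp
  have hp := hgpath s p hgp
  refine (pathRel_le_conn hπ hp).antisymm (not_lt.1 fun hlt => ?_)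
  obtain ⟨q, hq, hpq⟩ :=
    exists_isPath_lt_pathRel_of_lt_conn (pathRel_mem_Icc_of_isPath hπ hp).1 hlt
  set g' := Function.update g s ((g s).reroute p q)
  have hg'0 : ∀ v r, 0 ≤ g' v r :=
    (Function.forall_update_iff g fun _ f => ∀ r, 0 ≤ f r).2
      ⟨Finsupp.reroute_nonneg (hg0 s) p q, fun v _ => hg0 v⟩
  have hg'path : ∀ v r, g' v r ≠ 0 → IsPath adj v t r :=
    (Function.forall_update_iff g fun v f => ∀ r, f r ≠ 0 → IsPath adj v t r).2
      ⟨fun r hr => (Finsupp.eq_or_ne_zero_of_reroute_ne_zero hr).elim (· ▸ hq) (hgpath s r),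
        fun v _ => hgpath v⟩
  have hg'supply : ∀ v, ((g' v).sum fun _ y => y) ≤ w v :=
    (Function.forall_update_iff g fun v f => (f.sum fun _ y => y) ≤ w v).2
      ⟨(Finsupp.sum_reroute _ p q).trans_le (hsupply s), fun v _ => hsupply v⟩
  have hgain : (∑ v, (g' v).sum fun r y => y * pathRel π r)
      = (∑ v, (g v).sum fun r y => y * pathRel π r) + g s p * (pathRel π q - pathRel π p) := by
    simp only [g',
      Function.apply_update (fun _ (f : List V →₀ ℝ) => f.sum fun r y => y * pathRel π r),
      Fintype.sum_update_eq_add_sub, Finsupp.sum_mul_reroute, add_sub_cancel_left]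
  have := hopt g' hg'0 hg'path hg'supply
  have := mul_pos ((hg0 s p).lt_of_ne' hgp) (sub_pos.2 hpq)
  linarith

/-- In the generalized-flow program `(P)` with sink `t` (written here in path-flow form:
`g s` is a finitely supported assignment of nonnegative flow amounts to `st`-paths, the
supply routed from each `s` is at most `w_s`, and the objective — the flow arriving at `t` —
is `Σ_s Σ_p (g s p) · rel(p)`), any optimal solution routes flow along most reliable
paths only: rerouting `ε > 0` units from a path of strictly smaller reliability to a most
reliable path would strictly increase the objective. Hence at optimality every path
carrying positive flow from `s` has reliability `Π_{st}`. -/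
theorem stmt_2 {V : Type*} [Fintype V] (adj : V → V → Prop) (π : V → V → ℝ) (w : V → ℝ)
    (hπ : ∀ a b, adj a b → 0 < π a b ∧ π a b ≤ 1) (hw : ∀ v, 0 ≤ w v) (t : V)
    (g : V → (List V →₀ ℝ))
    (hg0 : ∀ s p, 0 ≤ g s p)
    (hgpath : ∀ s p, g s p ≠ 0 → IsPath adj s t p)
    (hsupply : ∀ s, ((g s).sum fun _ y => y) ≤ w s)
    (hopt : ∀ g' : V → (List V →₀ ℝ),
      (∀ s p, 0 ≤ g' s p) →
      (∀ s p, g' s p ≠ 0 → IsPath adj s t p) →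
      (∀ s, ((g' s).sum fun _ y => y) ≤ w s) →
      (∑ s : V, (g' s).sum fun p y => y * pathRel π p)
        ≤ ∑ s : V, (g s).sum fun p y => y * pathRel π p) :
    ∀ s p, g s p ≠ 0 → pathRel π p = conn adj π s t :=
  stmt_2_general adj π w hπ t g hg0 hgpath hsupply hopt
end

section
/- For every constant 0 < α < 1 there exists an instance of the budget-constrained ECA optimization problem on a tree (a spider graph with k+1 branches: k short branches of length 2 with internal node weight 0 and leaf weight 1, and one long branch of length 2k with internal node weights ε and leaf weight 1+ε, central node weight 1, all arcs of improved probability 1 and unimproved probability 0, unit costs, suitable budget and sufficiently small ε, large k) such that the best solution returned by either the incremental greedy or the decremental greedy algorithm achieves ECA value ALG with ALG < α·OPT, where OPT is the optimal ECA. Hence neither greedy algorithm provides a constant-factor approximation guarantee, even on trees. -/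
open scoped Classical

/-- Runs of the incremental greedy algorithm: starting from `S`, repeatedly purchase an
affordable element maximizing the immediate gain of `f` per unit cost, until no
affordable element remains; `IncGreedy f c B S T` holds iff such a run started at `S` can
end at `T`. -/
inductive IncGreedy {E : Type*} [Fintype E] [DecidableEq E]
    (f : Finset E → ℝ) (c : E → ℝ) (B : ℝ) : Finset E → Finset E → Prop
  | done (S : Finset E) :
      (∀ e ∉ S, ¬ (∑ a ∈ insert e S, c a) ≤ B) → IncGreedy f c B S S
  | step (S T : Finset E) (e : E) :
      e ∉ S → (∑ a ∈ insert e S, c a) ≤ B →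
      (∀ e' ∉ S, (∑ a ∈ insert e' S, c a) ≤ B →
        (f (insert e' S) - f S) / c e' ≤ (f (insert e S) - f S) / c e) →
      IncGreedy f c B (insert e S) T → IncGreedy f c B S T

/-- Runs of the decremental greedy algorithm: starting from `S` (all improvements),
repeatedly remove the element of smallest loss of `f` per unit cost until the budget
constraint is met. -/
inductive DecGreedy {E : Type*} [Fintype E] [DecidableEq E]
    (f : Finset E → ℝ) (c : E → ℝ) (B : ℝ) : Finset E → Finset E → Prop
  | done (S : Finset E) : (∑ a ∈ S, c a) ≤ B → DecGreedy f c B S S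
  | step (S T : Finset E) (e : E) :
      ¬ (∑ a ∈ S, c a) ≤ B → e ∈ S →
      (∀ e' ∈ S, (f S - f (S.erase e)) / c e ≤ (f S - f (S.erase e')) / c e') →
      DecGreedy f c B (S.erase e) T → DecGreedy f c B S T

/-- Vertices of the spider with `k + 1` branches: the central node, the two vertices
(internal, leaf) of each of the `k` short branches, and the `2k` vertices of the long
branch (position `2k − 1` being its leaf). -/
abbrev SpV (k : ℕ) := Unit ⊕ ((Fin k × Bool) ⊕ Fin (2 * k))

/-- Edges: for each short branch `i`, `(i, false)` is `center–internal i` and `(i, true)`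
is `internal i–leaf i`; the `j`-th edge of the long branch joins position `j − 1`
(the center for `j = 0`) to position `j`. -/
abbrev SpE (k : ℕ) := (Fin k × Bool) ⊕ Fin (2 * k)

def spEnds (k : ℕ) : SpE k → SpV k × SpV k
  | Sum.inl (i, false) => (Sum.inl (), Sum.inr (Sum.inl (i, false)))
  | Sum.inl (i, true) => (Sum.inr (Sum.inl (i, false)), Sum.inr (Sum.inl (i, true)))
  | Sum.inr j =>
      (if j.1 = 0 then Sum.inl ()
       else Sum.inr (Sum.inr ⟨j.1 - 1, Nat.lt_of_le_of_lt (Nat.sub_le _ _) j.2⟩),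
       Sum.inr (Sum.inr j))

/-- Weights: central node `1`, short-branch internal nodes `0`, short-branch leaves `1`,
long-branch internal nodes `ε`, long-branch leaf `1 + ε`. -/
noncomputable def spW (k : ℕ) (ε : ℝ) : SpV k → ℝ
  | Sum.inl _ => 1
  | Sum.inr (Sum.inl (_, b)) => if b then 1 else 0
  | Sum.inr (Sum.inr j) => if j.1 = 2 * k - 1 then 1 + ε else ε

/-- Probabilities: an edge has probability `1` (in both directions) if improved,
`0` otherwise. -/
noncomputable def spπ (k : ℕ) (S : Finset (SpE k)) (a b : SpV k) : ℝ :=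
  if ∃ e ∈ S, spEnds k e = (a, b) ∨ spEnds k e = (b, a) then 1 else 0

/-- `ECA²` of the spider when the set `S` of edges has been improved. -/
noncomputable def spEca2 (k : ℕ) (ε : ℝ) (S : Finset (SpE k)) : ℝ :=
  ∑ s : SpV k, ∑ t : SpV k,
    spW k ε s * spW k ε t * conn (fun a b => spπ k S a b ≠ 0) (spπ k S) s t

/-!
Adding an edge between two components of weights `W₁` and `W₂` raises `ECA²` by `2 W₁ W₂`
(`ImprovedGraph.eca2_insert`); every comparison the greedy algorithms make reduces to this.

Take budget `2k` and `ε = 1 / (4k)`. Buying the `2k` short-branch edges connects the center to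
the `k` leaves, so `OPT ≥ k + 1`. While only long-branch edges are bought, a short edge merely
attaches a weight-`0` internal node and gains nothing, whereas every long edge gains: incremental
greedy buys long edges only. Decremental greedy always removes short-branch edges: cutting the long branch
costs more than detaching a leaf, and once a branch has lost one edge its other edge is
worthless. Hence both runs end inside the long branch, where
`ECA² ≤ (2 + 2kε)² + k = k + 25/4`, which is below `(α (k + 1))²` for large `k`.
-/

theorem exists_isPath_iff_reflTransGen {V : Type*} (adj : V → V → Prop) (s t : V) :
    (∃ p, IsPath adj s t p) ↔ Relation.ReflTransGen adj s t := by
  constructor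
  · rintro ⟨p, hp⟩
    induction p generalizing s with
    | nil => exact hp.elim
    | cons a q ih =>
      cases q with
      | nil => obtain ⟨rfl, rfl⟩ := hp; exact .refl
      | cons b q => obtain ⟨rfl, hab, hq⟩ := hp; exact .head hab (ih b hq)
  · intro h
    induction h using Relation.ReflTransGen.head_induction_on with
    | refl => exact ⟨[t], rfl, rfl⟩
    | @head a c hac _ ih =>
      obtain ⟨p, hp⟩ := ih
      match p, hp with
      | x :: q, hp =>
        obtain rfl : x = c := by cases q <;> exact hp.1
        exact ⟨a :: x :: q, rfl, hac, hp⟩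

theorem IsPath.pathRel_eq_one {V : Type*} {adj : V → V → Prop} {π : V → V → ℝ}
    (hπ : ∀ a b, adj a b → π a b = 1) :
    ∀ {s t : V} {p : List V}, IsPath adj s t p → pathRel π p = 1
  | _, _, [], h => h.elim
  | _, _, [_], _ => rfl
  | _, _, a :: b :: p, ⟨_, hab, hp⟩ => by
    rw [pathRel, hπ a b hab, hp.pathRel_eq_one hπ, one_mul]

theorem conn_eq_ite_reflTransGen {V : Type*} {adj : V → V → Prop} {π : V → V → ℝ}
    (hπ : ∀ a b, adj a b → π a b = 1) (s t : V) :
    conn adj π s t = if Relation.ReflTransGen adj s t then 1 else 0 := by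
  have hpaths : {x | ∃ p, IsPath adj s t p ∧ pathRel π p = x}
      = if Relation.ReflTransGen adj s t then {1} else ∅ := by
    ext x
    rw [← exists_isPath_iff_reflTransGen]
    constructor
    · rintro ⟨p, hp, rfl⟩
      rw [if_pos ⟨p, hp⟩, hp.pathRel_eq_one hπ]
      rfl
    · split_ifs with h
      · rintro rfl
        obtain ⟨p, hp⟩ := h
        exact ⟨p, hp, hp.pathRel_eq_one hπ⟩
      · exact False.elim
  rw [conn, hpaths]
  split_ifs
  · rw [Set.singleton_union, csSup_pair]; norm_num
  · rw [Set.empty_union, csSup_singleton]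

noncomputable section

namespace ImprovedGraph

variable {V E : Type*} (ends : E → V × V)

def Adj (S : Finset E) (a b : V) : Prop :=
  ∃ e ∈ S, ends e = (a, b) ∨ ends e = (b, a)

def Reach (S : Finset E) : V → V → Prop :=
  Relation.ReflTransGen (Adj ends S)

variable {ends} {S : Finset E} {e : E} {a b s t v : V}

theorem Adj.symm (h : Adj ends S a b) : Adj ends S b a := by
  obtain ⟨e, he, h⟩ := h
  exact ⟨e, he, h.symm⟩

theorem Reach.refl (a : V) : Reach ends S a a := Relation.ReflTransGen.refl

theorem Reach.trans (h₁ : Reach ends S s v) (h₂ : Reach ends S v t) : Reach ends S s t :=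
  Relation.ReflTransGen.trans h₁ h₂

theorem Reach.symm (h : Reach ends S a b) : Reach ends S b a :=
  have : Std.Symm (Adj ends S) := ⟨fun _ _ => Adj.symm⟩
  Std.Symm.symm (r := Relation.ReflTransGen (Adj ends S)) _ _ h

theorem Reach.mono {S' : Finset E} (hS : S ⊆ S') (h : Reach ends S a b) : Reach ends S' a b :=
  Relation.ReflTransGen.mono (fun _ _ ⟨e, he, h⟩ => ⟨e, hS he, h⟩) _ _ h

theorem reach_of_mem (he : e ∈ S) (hab : ends e = (a, b)) : Reach ends S a b :=
  .single ⟨e, he, .inl hab⟩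

theorem Reach.iff_of_forall_mem (P : V → Prop) (hP : ∀ e ∈ S, (P (ends e).1 ↔ P (ends e).2))
    (h : Reach ends S s t) : P s ↔ P t := by
  induction h with
  | refl => rfl
  | tail _ hadj ih =>
    obtain ⟨e, he, hends | hends⟩ := hadj <;> have hPe := hP e he <;> rw [hends] at hPe
    exacts [ih.trans hPe, ih.trans hPe.symm]

theorem Reach.eq_of_isolated (hv : ∀ e ∈ S, (ends e).1 ≠ v ∧ (ends e).2 ≠ v)
    (h : Reach ends S v t) : t = v :=
  (h.iff_of_forall_mem (· = v) fun e he => iff_of_false (hv e he).1 (hv e he).2).mp rfl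

theorem reach_insert_iff [DecidableEq E] (hab : ends e = (a, b)) :
    Reach ends (insert e S) s t ↔
      Reach ends S s t ∨ (Reach ends S s a ∧ Reach ends S b t) ∨
        (Reach ends S s b ∧ Reach ends S a t) := by
  have hsub : S ⊆ insert e S := Finset.subset_insert e S
  constructor
  · intro h
    induction h using Relation.ReflTransGen.head_induction_on with
    | refl => exact .inl (.refl _)
    | @head s c hadj _ ih =>
      obtain ⟨e', he', hends⟩ := hadj
      rcases Finset.mem_insert.mp he' with rfl | he'
      · rcases hends with hends | hends <;> rw [hab, Prod.mk.injEq] at hends <;>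
          obtain ⟨rfl, rfl⟩ := hends
        · rcases ih with h | ⟨-, h⟩ | ⟨-, h⟩
          exacts [.inr (.inl ⟨.refl _, h⟩), .inr (.inl ⟨.refl _, h⟩), .inl h]
        · rcases ih with h | ⟨-, h⟩ | ⟨-, h⟩
          exacts [.inr (.inr ⟨.refl _, h⟩), .inl h, .inr (.inr ⟨.refl _, h⟩)]
      · have hadj : Adj ends S s c := ⟨e', he', hends⟩
        rcases ih with h | ⟨h, h'⟩ | ⟨h, h'⟩
        exacts [.inl (.head hadj h), .inr (.inl ⟨.head hadj h, h'⟩),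
          .inr (.inr ⟨.head hadj h, h'⟩)]
  · have hedge : Reach ends (insert e S) a b := reach_of_mem (Finset.mem_insert_self e S) hab
    rintro (h | ⟨h, h'⟩ | ⟨h, h'⟩)
    · exact h.mono hsub
    · exact ((h.mono hsub).trans hedge).trans (h'.mono hsub)
    · exact ((h.mono hsub).trans hedge.symm).trans (h'.mono hsub)

variable [Fintype V] (ends) (w : V → ℝ)

def compWeight (S : Finset E) (a : V) : ℝ :=
  ∑ t, if Reach ends S a t then w t else 0

/-- `ECA²` when exactly the edges in `S` have probability `1`, grouped by components. -/
def eca2 (S : Finset E) : ℝ :=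
  ∑ s, w s * compWeight ends w S s

variable {ends w}

theorem compWeight_congr (h : Reach ends S a b) : compWeight ends w S a = compWeight ends w S b :=
  Finset.sum_congr rfl fun t _ => by
    rw [show Reach ends S a t ↔ Reach ends S b t from ⟨h.symm.trans, h.trans⟩]

theorem sum_le_compWeight (hw : ∀ v, 0 ≤ w v) {T : Finset V}
    (hT : ∀ v ∈ T, Reach ends S a v) :
    ∑ v ∈ T, w v ≤ compWeight ends w S a := by
  calc ∑ v ∈ T, w v = ∑ v ∈ T, if Reach ends S a v then w v else 0 :=
        Finset.sum_congr rfl fun v hv => (if_pos (hT v hv)).symm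
    _ ≤ compWeight ends w S a :=
        Finset.sum_le_sum_of_subset_of_nonneg (Finset.subset_univ T) fun v _ _ => by
          split_ifs <;> simp [hw v]

theorem le_compWeight (hw : ∀ v, 0 ≤ w v) (h : Reach ends S a b) :
    w b ≤ compWeight ends w S a := by
  simpa using sum_le_compWeight hw (T := {b}) (by simpa using h)

theorem compWeight_of_isolated (hv : ∀ t, Reach ends S v t → t = v) :
    compWeight ends w S v = w v := by
  rw [compWeight, Finset.sum_eq_single v (fun t _ ht => if_neg (mt (hv t) ht)) (by simp),
    if_pos (.refl v)]

theorem compWeight_insert [DecidableEq E] (hab : ends e = (a, b)) (hnot : ¬ Reach ends S a b)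
    (s : V) :
    compWeight ends w (insert e S) s = compWeight ends w S s
      + (if Reach ends S s a then compWeight ends w S b else 0)
      + (if Reach ends S s b then compWeight ends w S a else 0) := by
  simp only [compWeight, Finset.ite_sum_zero, ← Finset.sum_add_distrib]
  refine Finset.sum_congr rfl fun t _ => ?_
  rw [reach_insert_iff hab]
  -- the three alternatives of `reach_insert_iff` are disjoint, as each two of them connect `a`, `b`
  by_cases hst : Reach ends S s t <;> by_cases hsa : Reach ends S s a <;>
    by_cases hsb : Reach ends S s b <;> by_cases hat : Reach ends S a t <;>
    by_cases hbt : Reach ends S b t <;> simp only [hst, hsa, hsb, hat, hbt] <;> (try simp) <;>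
    exfalso <;> first
    | exact hnot (hsa.symm.trans hsb)
    | exact hnot (hsa.symm.trans (hst.trans hbt.symm))
    | exact hnot (hat.trans (hst.symm.trans hsb))

theorem compWeight_insert_self [DecidableEq E] (hab : ends e = (a, b))
    (hnot : ¬ Reach ends S a b) :
    compWeight ends w (insert e S) a = compWeight ends w S a + compWeight ends w S b := by
  rw [compWeight_insert hab hnot, if_pos (.refl a), if_neg hnot, add_zero]

theorem sum_ite_reach_eq_compWeight (a : V) :
    ∑ s, (if Reach ends S s a then w s else 0) = compWeight ends w S a :=
  Finset.sum_congr rfl fun s _ => by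
    rw [show Reach ends S s a ↔ Reach ends S a s from ⟨.symm, .symm⟩]

theorem eca2_nonneg (hw : ∀ v, 0 ≤ w v) : 0 ≤ eca2 ends w S :=
  Finset.sum_nonneg fun s _ => mul_nonneg (hw s) <|
    Finset.sum_nonneg fun t _ => by split_ifs <;> simp [hw t]

theorem eca2_insert [DecidableEq E] (hab : ends e = (a, b)) (hnot : ¬ Reach ends S a b) :
    eca2 ends w (insert e S)
      = eca2 ends w S + 2 * compWeight ends w S a * compWeight ends w S b := by
  have hside (c : V) (x : ℝ) : ∑ s, w s * (if Reach ends S s c then x else 0)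
      = x * compWeight ends w S c := by
    simp only [mul_ite, mul_zero, ← sum_ite_reach_eq_compWeight, Finset.mul_sum]
    exact Finset.sum_congr rfl fun s _ => by split_ifs <;> ring
  simp only [eca2, compWeight_insert hab hnot, mul_add, Finset.sum_add_distrib, hside]
  ring

theorem eca2_insert_eq_of_isolated [DecidableEq E] (hab : ends e = (a, b)) (hne : a ≠ b)
    (hv : v = a ∨ v = b) (hiso : ∀ t, Reach ends S v t → t = v) (hw : w v = 0) :
    eca2 ends w (insert e S) = eca2 ends w S := by
  have hnot : ¬ Reach ends S a b := by
    rcases hv with rfl | rfl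
    · exact fun h => hne (hiso b h).symm
    · exact fun h => hne (hiso a h.symm)
  have hzero : compWeight ends w S v = 0 := by rw [compWeight_of_isolated hiso, hw]
  rw [eca2_insert hab hnot]
  rcases hv with rfl | rfl <;> simp [hzero]

/-- Detaching a pendant vertex `l` versus cutting the bridge `e₂` of the same component, whose
sides weigh `A` and `B`: the losses are `2 (A + B - w l) w l` and `2 A B`. -/
theorem eca2_erase_sub_eca2_erase [DecidableEq E] {e₁ e₂ : E} {a₁ l a₂ b₂ : V}
    (he₁ : e₁ ∈ S) (hab₁ : ends e₁ = (a₁, l)) (hne : a₁ ≠ l)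
    (hl : ∀ t, Reach ends (S.erase e₁) l t → t = l)
    (he₂ : e₂ ∈ S) (hab₂ : ends e₂ = (a₂, b₂))
    (hnot₂ : ¬ Reach ends (S.erase e₂) a₂ b₂) (hreach : Reach ends S a₁ a₂) :
    eca2 ends w (S.erase e₁) - eca2 ends w (S.erase e₂)
      = 2 * (compWeight ends w (S.erase e₂) a₂ - w l)
          * (compWeight ends w (S.erase e₂) b₂ - w l) := by
  have hnot₁ : ¬ Reach ends (S.erase e₁) a₁ l := fun h => hne (hl a₁ h.symm)
  have hW₁ := compWeight_insert_self (w := w) hab₁ hnot₁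
  have hW₂ := compWeight_insert_self (w := w) hab₂ hnot₂
  have hloss₁ := eca2_insert (w := w) hab₁ hnot₁
  have hloss₂ := eca2_insert (w := w) hab₂ hnot₂
  rw [Finset.insert_erase he₁, compWeight_of_isolated hl] at hW₁ hloss₁
  rw [Finset.insert_erase he₂] at hW₂ hloss₂
  rw [compWeight_congr hreach, hW₂] at hW₁
  linear_combination hloss₂ - hloss₁ + 2 * w l * hW₁

theorem eca2_lt_eca2_insert [DecidableEq E] (hw : ∀ v, 0 ≤ w v) {x y : V}
    (hxy : Reach ends (insert e S) x y) (hnot : ¬ Reach ends S x y) (hx : 0 < w x) (hy : 0 < w y) :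
    eca2 ends w S < eca2 ends w (insert e S) := by
  have hab : ends e = ((ends e).1, (ends e).2) := rfl
  have hne : ¬ Reach ends S (ends e).1 (ends e).2 := by
    intro h
    rcases (reach_insert_iff hab).mp hxy with h' | ⟨h₁, h₂⟩ | ⟨h₁, h₂⟩
    exacts [hnot h', hnot (h₁.trans (h.trans h₂)), hnot (h₁.trans (h.symm.trans h₂))]
  have hprod : 0 < compWeight ends w S (ends e).1 * compWeight ends w S (ends e).2 := by
    have hx' {c : V} (h : Reach ends S x c) := hx.trans_le (le_compWeight hw h.symm)
    have hy' {c : V} (h : Reach ends S c y) := hy.trans_le (le_compWeight hw h)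
    rcases (reach_insert_iff hab).mp hxy with h' | ⟨h₁, h₂⟩ | ⟨h₁, h₂⟩
    exacts [absurd h' hnot, mul_pos (hx' h₁) (hy' h₂), mul_pos (hy' h₂) (hx' h₁)]
  rw [eca2_insert hab hne]
  linarith

theorem sq_compWeight_le_eca2 (hw : ∀ v, 0 ≤ w v) (a : V) :
    compWeight ends w S a ^ 2 ≤ eca2 ends w S := by
  calc compWeight ends w S a ^ 2
      = ∑ s, (if Reach ends S s a then w s else 0) * compWeight ends w S a := by
        rw [← Finset.sum_mul, sum_ite_reach_eq_compWeight, sq]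
    _ ≤ ∑ s, w s * compWeight ends w S s := by
        refine Finset.sum_le_sum fun s _ => ?_
        split_ifs with h
        · rw [compWeight_congr h]
        · simpa using mul_nonneg (hw s) ((hw s).trans (le_compWeight hw (.refl s)))

theorem eca2_le_of_reach (hw : ∀ v, 0 ≤ w v) (P : V → Prop) [DecidablePred P]
    (h : ∀ s t, Reach ends S s t → s = t ∨ P s ∧ P t) :
    eca2 ends w S ≤ (∑ v with P v, w v) ^ 2 + ∑ v with ¬ P v, w v ^ 2 := by
  have hcomp (s : V) : compWeight ends w S s ≤ if P s then ∑ v with P v, w v else w s := by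
    split_ifs with hs
    · rw [Finset.sum_filter]
      refine Finset.sum_le_sum fun t _ => ?_
      by_cases hst : Reach ends S s t
      · obtain rfl | ⟨-, ht⟩ := h s t hst
        · simp [hst, hs]
        · simp [hst, ht]
      · split_ifs <;> simp [hw t]
    · refine (compWeight_of_isolated fun t hst => ?_).le
      obtain rfl | ⟨hs', -⟩ := h s t hst
      exacts [rfl, absurd hs' hs]
  calc eca2 ends w S ≤ ∑ s, w s * (if P s then ∑ v with P v, w v else w s) :=
        Finset.sum_le_sum fun s _ => mul_le_mul_of_nonneg_left (hcomp s) (hw s)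
    _ = (∑ v with P v, w v) ^ 2 + ∑ v with ¬ P v, w v ^ 2 := by
        simp only [mul_ite, Finset.sum_ite, ← Finset.sum_mul, sq]

end ImprovedGraph

end

noncomputable section

namespace Spider

open ImprovedGraph

variable {k : ℕ} {ε : ℝ} {S : Finset (SpE k)}

abbrev center (k : ℕ) : SpV k := Sum.inl ()

abbrev internal (i : Fin k) : SpV k := Sum.inr (Sum.inl (i, false))

abbrev leaf (i : Fin k) : SpV k := Sum.inr (Sum.inl (i, true))

/-- The vertex of the long branch at distance `n ≤ 2k` from the center (junk beyond). -/
def lv (k : ℕ) : ℕ → SpV k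
  | 0 => center k
  | n + 1 => if h : n < 2 * k then Sum.inr (Sum.inr ⟨n, h⟩) else center k

def depth : SpV k → ℕ
  | Sum.inr (Sum.inr j) => j.1 + 1
  | _ => 0

def longE (k : ℕ) : Finset (SpE k) := Finset.univ.image Sum.inr

def branchE (F : Finset (Fin k)) : Finset (SpE k) := (F ×ˢ Finset.univ).image Sum.inl

@[simp] theorem inr_mem_longE (j : Fin (2 * k)) : Sum.inr j ∈ longE k := by simp [longE]

@[simp] theorem inl_notMem_longE (x : Fin k × Bool) : Sum.inl x ∉ longE k := by simp [longE]

@[simp] theorem inl_mem_branchE {F : Finset (Fin k)} {i : Fin k} {b : Bool} :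
    Sum.inl (i, b) ∈ branchE F ↔ i ∈ F := by simp [branchE]

theorem card_longE : (longE k).card = 2 * k := by
  simp [longE, Finset.card_image_of_injective _ Sum.inr_injective]

theorem card_branchE_univ : (branchE (Finset.univ : Finset (Fin k))).card = 2 * k := by
  simp [branchE, Finset.card_image_of_injective _ Sum.inl_injective, mul_comm]

@[simp] theorem spEnds_inl_false (i : Fin k) :
    spEnds k (Sum.inl (i, false)) = (center k, internal i) := rfl

@[simp] theorem spEnds_inl_true (i : Fin k) :
    spEnds k (Sum.inl (i, true)) = (internal i, leaf i) := rfl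

theorem spEnds_inr (j : Fin (2 * k)) : spEnds k (Sum.inr j) = (lv k j, lv k (j + 1)) := by
  obtain ⟨_ | n, hj⟩ := j
  · simp [spEnds, lv, hj]
  · simp [spEnds, lv, hj, show n < 2 * k by omega]

theorem depth_lv {n : ℕ} (hn : n ≤ 2 * k) : depth (lv k n) = n := by
  cases n with
  | zero => rfl
  | succ n => simp [lv, depth, show n < 2 * k by omega]

@[simp] theorem spW_center : spW k ε (center k) = 1 := rfl

@[simp] theorem spW_internal (i : Fin k) : spW k ε (internal i) = 0 := rfl

@[simp] theorem spW_leaf (i : Fin k) : spW k ε (leaf i) = 1 := rfl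

theorem spW_nonneg (hε : 0 ≤ ε) (v : SpV k) : 0 ≤ spW k ε v := by
  rcases v with _ | ⟨_, _ | _⟩ | _ <;>
    simp only [spW, Bool.false_eq_true, if_false, if_true] <;> (try split_ifs) <;> linarith

theorem spW_lv_pos (hε : 0 < ε) (n : ℕ) : 0 < spW k ε (lv k n) := by
  cases n with
  | zero => simp [lv]
  | succ n =>
    simp only [lv]
    split_ifs
    · simp only [spW]; split_ifs <;> linarith
    · simp

theorem spW_lv_two_mul (hk : 0 < k) : spW k ε (lv k (2 * k)) = 1 + ε := by
  obtain ⟨n, hn⟩ : ∃ n, 2 * k = n + 1 := ⟨2 * k - 1, by omega⟩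
  simp [hn, lv, spW]

theorem spEca2_eq_eca2 : spEca2 k ε S = eca2 (spEnds k) (spW k ε) S := by
  have hadj : (fun a b => spπ k S a b ≠ 0) = Adj (spEnds k) S := by
    ext a b
    simp only [spπ, Adj, ne_eq, ite_eq_right_iff, one_ne_zero, imp_false, not_not]
  have hπ (a b : SpV k) (h : spπ k S a b ≠ 0) : spπ k S a b = 1 := by
    unfold spπ at h ⊢
    split_ifs at h ⊢ <;> simp_all
  simp only [spEca2, conn_eq_ite_reflTransGen hπ, eca2, compWeight, Finset.mul_sum]
  rw [hadj]
  exact Finset.sum_congr rfl fun s _ => Finset.sum_congr rfl fun t _ => by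
    by_cases h : Reach (spEnds k) S s t <;> simp_all [Reach]

theorem lv_ne_inl_inr (n : ℕ) (x : Fin k × Bool) : lv k n ≠ Sum.inr (Sum.inl x) := by
  cases n with
  | zero => simp [lv]
  | succ n => simp only [lv]; split_ifs <;> simp

theorem reach_lv {n m : ℕ} (hnm : n ≤ m) (hm : m ≤ 2 * k)
    (hS : ∀ j : Fin (2 * k), n ≤ j.1 → j.1 < m → Sum.inr j ∈ S) :
    Reach (spEnds k) S (lv k n) (lv k m) := by
  induction m, hnm using Nat.le_induction with
  | base => exact .refl _
  | succ m hnm ih =>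
    exact (ih (by omega) fun j h₁ h₂ => hS j h₁ (by omega)).trans
      (reach_of_mem (hS ⟨m, by omega⟩ hnm (by simp)) (spEnds_inr _))

theorem reach_center_leaf {i : Fin k} (h₀ : Sum.inl (i, false) ∈ S)
    (h₁ : Sum.inl (i, true) ∈ S) :
    Reach (spEnds k) S (center k) (leaf i) :=
  (reach_of_mem h₀ (spEnds_inl_false i)).trans (reach_of_mem h₁ (spEnds_inl_true i))

theorem lt_depth_iff_of_reach {j : Fin (2 * k)} (hj : Sum.inr j ∉ S) {s t : SpV k}
    (h : Reach (spEnds k) S s t) : j.1 < depth s ↔ j.1 < depth t := by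
  refine h.iff_of_forall_mem (fun v => j.1 < depth v) fun e he => ?_
  rcases e with ⟨i, _ | _⟩ | j'
  · simp [depth]
  · simp [depth]
  · have hne : j'.1 ≠ j.1 := fun h => hj (Fin.ext h ▸ he)
    rw [spEnds_inr, depth_lv j'.2.le, depth_lv j'.2]
    omega

theorem not_reach_lv {j : Fin (2 * k)} (hj : Sum.inr j ∉ S) :
    ¬ Reach (spEnds k) S (lv k j) (lv k (j + 1)) := fun h => by
  have := lt_depth_iff_of_reach hj h
  rw [depth_lv j.2.le, depth_lv j.2] at this
  omega

theorem eq_of_reach_leaf {i : Fin k} (hi : Sum.inl (i, true) ∉ S) {t : SpV k}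
    (h : Reach (spEnds k) S (leaf i) t) : t = leaf i := by
  refine h.eq_of_isolated fun e he => ?_
  rcases e with ⟨i', _ | _⟩ | j
  · simp
  · have : i' ≠ i := by rintro rfl; exact hi he
    simp [this]
  · simp [spEnds_inr, lv_ne_inl_inr]

theorem eq_of_reach_internal {i : Fin k} (h₀ : Sum.inl (i, false) ∉ S)
    (h₁ : Sum.inl (i, true) ∉ S) {t : SpV k} (h : Reach (spEnds k) S (internal i) t) :
    t = internal i := by
  refine h.eq_of_isolated fun e he => ?_
  rcases e with ⟨i', b⟩ | j
  · have : i' ≠ i := by rintro rfl; cases b <;> contradiction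
    cases b <;> simp [this]
  · simp [spEnds_inr, lv_ne_inl_inr]

theorem not_reach_center_leaf {i : Fin k}
    (hi : Sum.inl (i, false) ∉ S ∨ Sum.inl (i, true) ∉ S) :
    ¬ Reach (spEnds k) S (center k) (leaf i) := by
  intro h
  rcases hi with hi | hi
  · have hbranch := h.iff_of_forall_mem (fun v => v = internal i ∨ v = leaf i) fun e he => by
      rcases e with ⟨i', _ | _⟩ | j
      · have : i' ≠ i := by rintro rfl; exact hi he
        simp [this]
      · simp
      · simp [spEnds_inr, lv_ne_inl_inr]
    simp at hbranch
  · exact absurd (eq_of_reach_leaf hi h.symm) (by simp)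

theorem eca2_insert_inl_of_notMem {i : Fin k} (h₀ : Sum.inl (i, false) ∉ S)
    (h₁ : Sum.inl (i, true) ∉ S) (b : Bool) :
    eca2 (spEnds k) (spW k ε) (insert (Sum.inl (i, b)) S) = eca2 (spEnds k) (spW k ε) S := by
  have hiso (t : SpV k) := eq_of_reach_internal (t := t) h₀ h₁
  cases b
  · exact eca2_insert_eq_of_isolated (spEnds_inl_false i) (by simp) (.inr rfl) hiso (by simp)
  · exact eca2_insert_eq_of_isolated (spEnds_inl_true i) (by simp) (.inl rfl) hiso (by simp)

theorem eca2_lt_eca2_insert_inr (hε : 0 < ε) {j : Fin (2 * k)} (hj : Sum.inr j ∉ S) :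
    eca2 (spEnds k) (spW k ε) S < eca2 (spEnds k) (spW k ε) (insert (Sum.inr j) S) :=
  eca2_lt_eca2_insert (spW_nonneg hε.le) (reach_of_mem (S.mem_insert_self _) (spEnds_inr j))
    (not_reach_lv hj) (spW_lv_pos hε _) (spW_lv_pos hε _)

/-- By `eca2_erase_sub_eca2_erase` the difference is `2 (W₁ - 1) (W₂ - 1)`, where `W₁ ≥ 2`
(center and leaf `i` lie on the head side of the cut) and `W₂ ≥ 1 + ε` (the end of the long
branch lies on its tail side). -/
theorem eca2_erase_inr_lt_eca2_erase_leaf (hε : 0 < ε) (hlong : ∀ j, Sum.inr j ∈ S)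
    {i : Fin k} (h₀ : Sum.inl (i, false) ∈ S) (h₁ : Sum.inl (i, true) ∈ S) (j : Fin (2 * k)) :
    eca2 (spEnds k) (spW k ε) (S.erase (Sum.inr j))
      < eca2 (spEnds k) (spW k ε) (S.erase (Sum.inl (i, true))) := by
  have hw := spW_nonneg (k := k) hε.le
  set S₂ := S.erase (Sum.inr j)
  have hlong₂ (j' : Fin (2 * k)) (hj' : j' ≠ j) : Sum.inr j' ∈ S₂ :=
    Finset.mem_erase.mpr ⟨by simpa using hj', hlong j'⟩
  have hhead : Reach (spEnds k) S₂ (center k) (lv k j) :=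
    reach_lv (Nat.zero_le _) j.2.le fun j' _ h => hlong₂ j' (Fin.ne_of_lt h)
  have htail : Reach (spEnds k) S₂ (lv k (j + 1)) (lv k (2 * k)) :=
    reach_lv (by omega) le_rfl fun j' h _ => hlong₂ j' (Fin.ne_of_gt h)
  have hdiff := eca2_erase_sub_eca2_erase (w := spW k ε) h₁ (spEnds_inl_true i) (by simp)
    (fun t => eq_of_reach_leaf (Finset.notMem_erase _ _)) (hlong j) (spEnds_inr j)
    (not_reach_lv (Finset.notMem_erase _ _))
    ((reach_of_mem h₀ (spEnds_inl_false i)).symm.trans (hhead.mono (S.erase_subset _)))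
  have hA : 2 ≤ compWeight (spEnds k) (spW k ε) S₂ (lv k j) := by
    have hleaf : Reach (spEnds k) S₂ (center k) (leaf i) :=
      reach_center_leaf (Finset.mem_erase.mpr ⟨by simp, h₀⟩) (Finset.mem_erase.mpr ⟨by simp, h₁⟩)
    have := sum_le_compWeight hw (T := {center k, leaf i}) (a := lv k j) (S := S₂) (by
      simp only [Finset.mem_insert, Finset.mem_singleton, forall_eq_or_imp, forall_eq]
      exact ⟨hhead.symm, hhead.symm.trans hleaf⟩)
    rw [Finset.sum_pair (by simp)] at this
    simpa [one_add_one_eq_two] using this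
  have hB : 1 < compWeight (spEnds k) (spW k ε) S₂ (lv k (j + 1)) := by
    have := le_compWeight hw htail
    rw [spW_lv_two_mul (by have := j.2; omega)] at this
    linarith
  rw [spW_leaf] at hdiff
  nlinarith

theorem erase_erase_inl_not (F : Finset (Fin k)) (i : Fin k) (b : Bool) :
    ((longE k ∪ branchE F).erase (Sum.inl (i, b))).erase (Sum.inl (i, !b))
      = longE k ∪ branchE (F.erase i) := by
  ext (⟨i', b'⟩ | j)
  · by_cases h : i' = i
    · subst h; cases b <;> cases b' <;> simp
    · simp [h]
  · simp

theorem eca2_erase_inl_not {F : Finset (Fin k)} {i : Fin k} (hi : i ∈ F) (b : Bool) :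
    eca2 (spEnds k) (spW k ε)
        (((longE k ∪ branchE F).erase (Sum.inl (i, b))).erase (Sum.inl (i, !b)))
      = eca2 (spEnds k) (spW k ε) ((longE k ∪ branchE F).erase (Sum.inl (i, b))) := by
  have hmem : Sum.inl (i, !b) ∈ (longE k ∪ branchE F).erase (Sum.inl (i, b)) := by
    cases b <;> simp [hi]
  conv_rhs => rw [← Finset.insert_erase hmem]
  rw [erase_erase_inl_not]
  exact (eca2_insert_inl_of_notMem (by simp) (by simp) _).symm

theorem eca2_erase_lt_of_ne_inl_not (hε : 0 < ε) {F : Finset (Fin k)} {i : Fin k} {b : Bool}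
    {e : SpE k} (he : e ∈ (longE k ∪ branchE F).erase (Sum.inl (i, b)))
    (hne : e ≠ Sum.inl (i, !b)) :
    eca2 (spEnds k) (spW k ε) (((longE k ∪ branchE F).erase (Sum.inl (i, b))).erase e)
      < eca2 (spEnds k) (spW k ε) ((longE k ∪ branchE F).erase (Sum.inl (i, b))) := by
  set H := (longE k ∪ branchE F).erase (Sum.inl (i, b))
  conv_rhs => rw [← Finset.insert_erase he]
  rcases e with ⟨i', b'⟩ | j
  · have hi' : i' ≠ i := by
      rintro rfl
      cases b <;> cases b' <;> simp_all [H]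
    have hi'F : i' ∈ F := by simp_all [H]
    refine eca2_lt_eca2_insert (spW_nonneg hε.le) (x := center k) (y := leaf i') ?_ ?_
      (by simp) (by simp)
    · rw [Finset.insert_erase he]
      exact reach_center_leaf (by simp [H, hi', hi'F]) (by simp [H, hi', hi'F])
    · exact not_reach_center_leaf (by cases b' <;> simp)
  · exact eca2_lt_eca2_insert_inr hε (Finset.notMem_erase _ _)

theorem sum_spW_long (hk : 0 < k) :
    ∑ j : Fin (2 * k), spW k ε (Sum.inr (Sum.inr j)) = 2 * k * ε + 1 := by
  have hterm (j : Fin (2 * k)) : spW k ε (Sum.inr (Sum.inr j))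
      = ε + if j = ⟨2 * k - 1, by omega⟩ then 1 else 0 := by
    simp only [spW, Fin.ext_iff]
    split_ifs <;> ring
  simp [hterm, Finset.sum_add_distrib]

theorem eca2_le_of_subset_longE (hk : 0 < k) (hε : 0 ≤ ε) (hS : S ⊆ longE k) :
    eca2 (spEnds k) (spW k ε) S ≤ (2 + 2 * k * ε) ^ 2 + k := by
  have hshort (x : Fin k × Bool) : Sum.inl x ∉ S := fun h => inl_notMem_longE x (hS h)
  have hiso (x : Fin k × Bool) (t : SpV k) (h : Reach (spEnds k) S (Sum.inr (Sum.inl x)) t) :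
      t = Sum.inr (Sum.inl x) := by
    obtain ⟨i, _ | _⟩ := x
    exacts [eq_of_reach_internal (hshort _) (hshort _) h, eq_of_reach_leaf (hshort _) h]
  let P : SpV k → Prop := fun v => ∀ x, v ≠ Sum.inr (Sum.inl x)
  refine (eca2_le_of_reach (spW_nonneg hε) P fun s t h => ?_).trans_eq ?_
  · by_cases hs : P s
    · by_cases ht : P t
      · exact .inr ⟨hs, ht⟩
      · obtain ⟨x, rfl⟩ : ∃ x, t = Sum.inr (Sum.inl x) := by simpa [P] using (not_forall.mp ht)
        exact .inl (hiso x s h.symm)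
    · obtain ⟨x, rfl⟩ : ∃ x, s = Sum.inr (Sum.inl x) := by simpa [P] using (not_forall.mp hs)
      exact .inl (hiso x t h).symm
  · simp [P, Finset.sum_filter, Fintype.sum_sum_type, Fintype.sum_prod_type, sum_spW_long hk]
    ring

theorem sq_le_eca2_branchE_univ (hε : 0 ≤ ε) :
    ((k : ℝ) + 1) ^ 2 ≤ eca2 (spEnds k) (spW k ε) (branchE Finset.univ) := by
  have hT : ∀ v ∈ insert (center k) (Finset.univ.image leaf),
      Reach (spEnds k) (branchE Finset.univ) (center k) v := by
    simp only [Finset.mem_insert, Finset.mem_image, Finset.mem_univ, true_and]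
    rintro v (rfl | ⟨i, rfl⟩)
    exacts [.refl _, reach_center_leaf (by simp) (by simp)]
  have hW := sum_le_compWeight (spW_nonneg hε) hT
  rw [Finset.sum_insert (by simp), Finset.sum_image fun _ _ _ _ h => by simpa using h] at hW
  simp only [spW_center, spW_leaf, Finset.sum_const, Finset.card_univ, Fintype.card_fin,
    nsmul_eq_mul, mul_one] at hW
  calc ((k : ℝ) + 1) ^ 2
      ≤ compWeight (spEnds k) (spW k ε) (branchE Finset.univ) (center k) ^ 2 := by
        gcongr; linarith
    _ ≤ _ := sq_compWeight_le_eca2 (spW_nonneg hε) _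

theorem incGreedy_subset_longE (hε : 0 < ε) {S T : Finset (SpE k)}
    (h : IncGreedy (fun U => √(spEca2 k ε U)) (fun _ => 1) (2 * k) S T) (hS : S ⊆ longE k) :
    T ⊆ longE k := by
  induction h with
  | done => exact hS
  | step S T e he hcost hmax _ ih =>
    refine ih (Finset.insert_subset ?_ hS)
    obtain ⟨i, b⟩ | j := e
    · exfalso
      have hcard : S.card + 1 ≤ 2 * k := by
        simp only [Finset.sum_const, nsmul_eq_mul, mul_one,
          Finset.card_insert_of_notMem he] at hcost
        exact_mod_cast hcost
      obtain ⟨_, hlong, hj⟩ := Finset.exists_mem_notMem_of_card_lt_card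
        (show S.card < (longE k).card by rw [card_longE]; omega)
      obtain ⟨j, -, rfl⟩ := Finset.mem_image.mp hlong
      have hgain := hmax _ hj (by simpa [Finset.card_insert_of_notMem hj,
        Finset.card_insert_of_notMem he] using hcost)
      rw [div_one, div_one, sub_le_sub_iff_right, spEca2_eq_eca2, spEca2_eq_eca2,
        eca2_insert_inl_of_notMem (fun h => inl_notMem_longE _ (hS h))
          (fun h => inl_notMem_longE _ (hS h))] at hgain
      exact hgain.not_gt <| Real.sqrt_lt_sqrt (eca2_nonneg (spW_nonneg hε.le))
        (eca2_lt_eca2_insert_inr hε hj)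
    · simp

/-- The sets through which decremental greedy passes: the long branch and some complete short
branches, possibly minus one edge of one of them. -/
def DecState (S : Finset (SpE k)) : Prop :=
  ∃ F : Finset (Fin k), S = longE k ∪ branchE F ∨
    ∃ i ∈ F, ∃ b, S = (longE k ∪ branchE F).erase (Sum.inl (i, b))

theorem DecState.longE_subset (h : DecState S) : longE k ⊆ S := by
  obtain ⟨F, rfl | ⟨i, -, b, rfl⟩⟩ := h
  · exact Finset.subset_union_left
  · intro e he
    obtain ⟨j, -, rfl⟩ := Finset.mem_image.mp he
    simp

theorem DecState.erase (hε : 0 < ε) (hS : DecState S) (hne : S ≠ longE k) {e : SpE k}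
    (he : e ∈ S) (hmin : ∀ e' ∈ S,
      eca2 (spEnds k) (spW k ε) (S.erase e') ≤ eca2 (spEnds k) (spW k ε) (S.erase e)) :
    DecState (S.erase e) := by
  obtain ⟨F, rfl | ⟨i, hi, b, rfl⟩⟩ := hS
  · obtain ⟨i, b⟩ | j := e
    · exact ⟨F, .inr ⟨i, by simpa using he, b, rfl⟩⟩
    · obtain ⟨i, hi⟩ : F.Nonempty := by
        rw [Finset.nonempty_iff_ne_empty]
        rintro rfl
        exact hne (by simp [branchE])
      exact absurd (hmin _ (by simp [hi])) <| not_le.mpr <|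
        eca2_erase_inr_lt_eca2_erase_leaf (i := i) hε (by simp) (by simp [hi]) (by simp [hi]) j
  · by_cases hpair : e = Sum.inl (i, !b)
    · exact ⟨F.erase i, .inl (hpair ▸ erase_erase_inl_not F i b)⟩
    · have hmem : Sum.inl (i, !b) ∈ (longE k ∪ branchE F).erase (Sum.inl (i, b)) := by
        cases b <;> simp [hi]
      refine absurd (hmin _ hmem) (not_le.mpr ?_)
      rw [eca2_erase_inl_not hi b]
      exact eca2_erase_lt_of_ne_inl_not hε he hpair

theorem decGreedy_eq_longE (hε : 0 < ε) {S T : Finset (SpE k)}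
    (h : DecGreedy (fun U => √(spEca2 k ε U)) (fun _ => 1) (2 * k) S T) (hS : DecState S) :
    T = longE k := by
  induction h with
  | done S hle =>
    refine (Finset.eq_of_subset_of_card_le hS.longE_subset ?_).symm
    simp only [Finset.sum_const, nsmul_eq_mul, mul_one] at hle
    rw [card_longE]
    exact_mod_cast hle
  | step S T e hover he hmin _ ih =>
    refine ih (hS.erase hε (fun h => hover (by simp [h, card_longE])) he fun e' he' => ?_)
    have := hmin e' he'
    rwa [div_one, div_one, sub_le_sub_iff_left, spEca2_eq_eca2, spEca2_eq_eca2,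
      Real.sqrt_le_sqrt_iff (eca2_nonneg (spW_nonneg hε.le))] at this

theorem subset_longE_of_greedy (hε : 0 < ε) {S : Finset (SpE k)}
    (h : IncGreedy (fun T => √(spEca2 k ε T)) (fun _ => 1) (2 * k) ∅ S ∨
      DecGreedy (fun T => √(spEca2 k ε T)) (fun _ => 1) (2 * k) Finset.univ S) :
    S ⊆ longE k := by
  rcases h with h | h
  · exact incGreedy_subset_longE hε h (Finset.empty_subset _)
  · refine (decGreedy_eq_longE hε h ⟨Finset.univ, .inl ?_⟩).subset
    ext (⟨i, b⟩ | j) <;> simp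

end Spider

end

theorem exists_nat_add_seven_lt_sq {α : ℝ} (hα : 0 < α) :
    ∃ k : ℕ, 0 < k ∧ (k : ℝ) + 7 < (α * (k + 1)) ^ 2 := by
  refine ⟨⌈8 / α ^ 2⌉₊ + 1, by omega, ?_⟩
  set k : ℕ := ⌈8 / α ^ 2⌉₊ + 1
  have hk : 8 ≤ α ^ 2 * k := by
    have := Nat.le_ceil (8 / α ^ 2)
    rw [div_le_iff₀ (by positivity)] at this
    push_cast [k]
    nlinarith
  nlinarith

open Spider ImprovedGraph in
/-- Neither incremental nor decremental greedy provides any constant-factor approximation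
guarantee for BC-ECA-Opt, even on trees: for every `0 < α < 1` there is an instance
(a spider with `k` short branches of length 2 and one long branch of length `2k`, unit
costs, suitable budget `B` and small `ε > 0`) on which every solution returned by either
greedy algorithm has ECA value strictly less than `α` times the optimal ECA value. -/
theorem stmt_11 :
    ∀ α : ℝ, 0 < α → α < 1 →
      ∃ (k : ℕ) (ε B : ℝ), 0 < k ∧ 0 < ε ∧ 0 ≤ B ∧
        ∀ S : Finset (SpE k),
          (IncGreedy (fun T => Real.sqrt (spEca2 k ε T)) (fun _ => 1) B ∅ S ∨
           DecGreedy (fun T => Real.sqrt (spEca2 k ε T)) (fun _ => 1) B Finset.univ S) →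
          Real.sqrt (spEca2 k ε S)
            < α * sSup {x : ℝ | ∃ T : Finset (SpE k),
                (∑ a ∈ T, (1 : ℝ)) ≤ B ∧ Real.sqrt (spEca2 k ε T) = x} := by
  intro α hα _
  obtain ⟨k, hk, hαk⟩ := exists_nat_add_seven_lt_sq hα
  set ε : ℝ := 1 / (4 * k)
  have hε : 0 < ε := by positivity
  refine ⟨k, ε, 2 * k, hk, hε, by positivity, fun S hS => ?_⟩
  have hALG : spEca2 k ε S < (α * (k + 1)) ^ 2 := by
    have h2kε : 2 * k * ε = 1 / 2 := by
      rw [show ε = 1 / (4 * k) from rfl]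
      field_simp
      ring
    have := eca2_le_of_subset_longE hk hε.le (subset_longE_of_greedy hε hS)
    rw [h2kε] at this
    rw [spEca2_eq_eca2]
    linarith
  have hOPT : (k : ℝ) + 1 ≤ sSup {x : ℝ | ∃ T : Finset (SpE k),
      (∑ a ∈ T, (1 : ℝ)) ≤ 2 * k ∧ √(spEca2 k ε T) = x} := by
    refine le_csSup_of_le ((Set.finite_range fun T => √(spEca2 k ε T)).subset ?_).bddAbove
      ⟨branchE Finset.univ, by simp [card_branchE_univ], rfl⟩ ?_
    · rintro _ ⟨T, -, rfl⟩
      exact ⟨T, rfl⟩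
    · rw [spEca2_eq_eca2, Real.le_sqrt (by positivity) (eca2_nonneg (spW_nonneg hε.le))]
      exact sq_le_eca2_branchE_univ hε.le
  calc √(spEca2 k ε S) < α * (k + 1) := (Real.sqrt_lt' (by positivity)).mpr hALG
    _ ≤ _ := by gcongr
end

section
/- Improving two consecutive corridors can produce a super-additive gain in ECA²: there exists a graph (e.g. a path s—u—t with w_s = w_t = 1, w_u = 0, both arcs of probability 0 unimproved and probability p ∈ (0,1] improved) for which the increase in ECA² when both arcs are improved simultaneously (namely 2p²) is strictly greater than the sum of the increases when each arc is improved alone (namely 0 + 0). -/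
open scoped Classical

/-- The path graph `s — u — t` on `Fin 3` (vertices `0 — 1 — 2`): probability of the
(bidirectional) edge `e ∈ Fin 2` is `p` if `e` is improved (i.e. `e ∈ S`) and `0`
otherwise. -/
noncomputable def pathπ (p : ℝ) (S : Set (Fin 2)) (a b : Fin 3) : ℝ :=
  if ((a = 0 ∧ b = 1) ∨ (a = 1 ∧ b = 0)) ∧ (0 : Fin 2) ∈ S then p
  else if ((a = 1 ∧ b = 2) ∨ (a = 2 ∧ b = 1)) ∧ (1 : Fin 2) ∈ S then p
  else 0

/-- Vertex weights `w_s = w_t = 1`, `w_u = 0`. -/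
noncomputable def pathw : Fin 3 → ℝ := ![1, 0, 1]

/-- `ECA²` of the instance where the set `S` of edges has been improved. -/
noncomputable def eca2 (p : ℝ) (S : Set (Fin 2)) : ℝ :=
  ∑ s : Fin 3, ∑ t : Fin 3,
    pathw s * pathw t * conn (fun a b => pathπ p S a b ≠ 0) (pathπ p S) s t

/-! The two endpoints `s`, `t` are the only vertices of positive weight, so `ECA²` is
`Π_ss + Π_tt + Π_st + Π_ts = 2 + 2 Π_st`. If one edge stays unimproved, one endpoint is
isolated and `Π_st = 0`; if both are improved, every `st`-path has at least two edges of
probability `p ≤ 1`, and `s — u — t` attains `Π_st = p²`. -/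

section Reliability

variable {V : Type*} {adj : V → V → Prop} {π : V → V → ℝ} {s t : V}

lemma pathRel_nonneg (h0 : ∀ a b, 0 ≤ π a b) : ∀ l : List V, 0 ≤ pathRel π l
  | [] | [_] => zero_le_one
  | a :: b :: l => mul_nonneg (h0 a b) (pathRel_nonneg h0 (b :: l))

lemma pathRel_le_one (h0 : ∀ a b, 0 ≤ π a b) (h1 : ∀ a b, π a b ≤ 1) :
    ∀ l : List V, pathRel π l ≤ 1
  | [] | [_] => le_rfl
  | a :: b :: l =>
      mul_le_one₀ (h1 a b) (pathRel_nonneg h0 (b :: l)) (pathRel_le_one h0 h1 (b :: l))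

lemma IsPath.exists_adj_left : ∀ {l : List V}, IsPath adj s t l → s ≠ t → ∃ b, adj s b
  | [_], ⟨hs, ht⟩, hst => absurd (hs.symm.trans ht) hst
  | _ :: b :: _, ⟨rfl, hab, _⟩, _ => ⟨b, hab⟩

lemma IsPath.exists_adj_right :
    ∀ {s : V} {l : List V}, IsPath adj s t l → s ≠ t → ∃ a, adj a t
  | _, [_], ⟨hs, ht⟩, hst => absurd (hs.symm.trans ht) hst
  | _, a :: b :: l, ⟨rfl, hab, hl⟩, _ => by
      by_cases hbt : b = t
      · exact ⟨a, hbt ▸ hab⟩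
      · exact hl.exists_adj_right hbt

lemma IsPath.three_le_length {l : List V} (hl : IsPath adj s t l) (hst : s ≠ t)
    (hadj : ¬ adj s t) : 3 ≤ l.length :=
  match l, hl with
  | [_], ⟨hs, ht⟩ => absurd (hs.symm.trans ht) hst
  | [_, _], ⟨rfl, hab, _, rfl⟩ => absurd hab hadj
  | _ :: _ :: _ :: _, _ => by simp

lemma IsPath.pathRel_eq_pow {p : ℝ} (hπ : ∀ a b, π a b ≠ 0 → π a b = p) :
    ∀ {s : V} {l : List V}, IsPath (fun a b => π a b ≠ 0) s t l →
      pathRel π l = p ^ (l.length - 1)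
  | _, [_], _ => by simp [pathRel]
  | _, a :: b :: l, ⟨_, hab, hl⟩ => by
      rw [pathRel, hπ a b hab, hl.pathRel_eq_pow hπ]
      simp [pow_succ']

lemma conn_eq_of_isGreatest {c : ℝ} (hc : 0 ≤ c)
    (h : IsGreatest {x | ∃ l, IsPath adj s t l ∧ pathRel π l = x} c) : conn adj π s t = c :=
  IsGreatest.csSup_eq ⟨Or.inl h.1, by rintro x (hx | rfl); exacts [h.2 hx, hc]⟩

lemma conn_eq_zero_of_forall_not_isPath (h : ∀ l, ¬ IsPath adj s t l) :
    conn adj π s t = 0 :=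
  IsGreatest.csSup_eq
    ⟨Or.inr rfl, by rintro x (⟨l, hl, -⟩ | rfl); exacts [(h l hl).elim, le_rfl]⟩

lemma conn_eq_zero_of_not_adj_left (hst : s ≠ t) (hs : ∀ b, ¬ adj s b) :
    conn adj π s t = 0 :=
  conn_eq_zero_of_forall_not_isPath fun _ hl => (hl.exists_adj_left hst).elim hs

lemma conn_eq_zero_of_not_adj_right (hst : s ≠ t) (ht : ∀ a, ¬ adj a t) :
    conn adj π s t = 0 :=
  conn_eq_zero_of_forall_not_isPath fun _ hl => (hl.exists_adj_right hst).elim ht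

lemma conn_self (h0 : ∀ a b, 0 ≤ π a b) (h1 : ∀ a b, π a b ≤ 1) : conn adj π s s = 1 :=
  conn_eq_of_isGreatest zero_le_one
    ⟨⟨[s], ⟨rfl, rfl⟩, rfl⟩, by rintro _ ⟨l, -, rfl⟩; exact pathRel_le_one h0 h1 l⟩

lemma conn_eq_pow_of_shortest {p : ℝ} (hp0 : 0 ≤ p) (hp1 : p ≤ 1)
    (hπ : ∀ a b, π a b ≠ 0 → π a b = p) {l : List V}
    (hl : IsPath (fun a b => π a b ≠ 0) s t l)
    (hmin : ∀ l', IsPath (fun a b => π a b ≠ 0) s t l' → l.length ≤ l'.length) :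
    conn (fun a b => π a b ≠ 0) π s t = p ^ (l.length - 1) := by
  refine conn_eq_of_isGreatest (pow_nonneg hp0 _) ⟨⟨l, hl, hl.pathRel_eq_pow hπ⟩, ?_⟩
  rintro _ ⟨l', hl', rfl⟩
  rw [hl'.pathRel_eq_pow hπ]
  exact pow_le_pow_of_le_one hp0 hp1 (Nat.sub_le_sub_right (hmin l' hl') 1)

end Reliability

section PathInstance

variable {p : ℝ} {S : Set (Fin 2)}

lemma pathπ_nonneg (hp0 : 0 ≤ p) (a b : Fin 3) : 0 ≤ pathπ p S a b := by
  unfold pathπ; split_ifs <;> linarith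

lemma pathπ_le_one (hp1 : p ≤ 1) (a b : Fin 3) : pathπ p S a b ≤ 1 := by
  unfold pathπ; split_ifs <;> linarith

lemma pathπ_eq_of_ne_zero (a b : Fin 3) (h : pathπ p S a b ≠ 0) : pathπ p S a b = p := by
  unfold pathπ at *; split_ifs at * <;> tauto

lemma pathπ_comm (a b : Fin 3) : pathπ p S a b = pathπ p S b a := by
  unfold pathπ; fin_cases a <;> fin_cases b <;> simp

lemma pathπ_zero_left (h : 0 ∉ S) (b : Fin 3) : pathπ p S 0 b = 0 := by
  unfold pathπ; fin_cases b <;> simp [h]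

lemma pathπ_two_left (h : 1 ∉ S) (b : Fin 3) : pathπ p S 2 b = 0 := by
  unfold pathπ; fin_cases b <;> simp [h]

lemma pathπ_pair_ne_zero (hp0 : p ≠ 0) {a b : Fin 3}
    (hab : a.val + 1 = b.val ∨ b.val + 1 = a.val) : pathπ p {0, 1} a b ≠ 0 := by
  unfold pathπ; fin_cases a <;> fin_cases b <;> simp_all

lemma pathπ_pair_zero_two : pathπ p {0, 1} 0 2 = 0 := by
  simp [pathπ, Fin.ext_iff]

lemma eca2_eq_two_add_conn (hp0 : 0 ≤ p) (hp1 : p ≤ 1) :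
    eca2 p S = 2 + conn (fun a b => pathπ p S a b ≠ 0) (pathπ p S) 0 2
      + conn (fun a b => pathπ p S a b ≠ 0) (pathπ p S) 2 0 := by
  simp [eca2, Fin.sum_univ_three, pathw, conn_self (pathπ_nonneg hp0) (pathπ_le_one hp1)]
  ring

lemma eca2_eq_two (hp0 : 0 ≤ p) (hp1 : p ≤ 1) (hS : 0 ∉ S ∨ 1 ∉ S) : eca2 p S = 2 := by
  have hfrom (v : Fin 3) (hv : ∀ b, pathπ p S v b = 0) : ∀ b, ¬ pathπ p S v b ≠ 0 :=
    fun b => not_not.2 (hv b)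
  have hto (v : Fin 3) (hv : ∀ b, pathπ p S v b = 0) : ∀ a, ¬ pathπ p S a v ≠ 0 :=
    fun a => not_not.2 (pathπ_comm a v ▸ hv a)
  rw [eca2_eq_two_add_conn hp0 hp1]
  rcases hS with h | h
  · rw [conn_eq_zero_of_not_adj_left (by decide) (hfrom 0 (pathπ_zero_left h)),
      conn_eq_zero_of_not_adj_right (by decide) (hto 0 (pathπ_zero_left h))]
    norm_num
  · rw [conn_eq_zero_of_not_adj_right (by decide) (hto 2 (pathπ_two_left h)),
      conn_eq_zero_of_not_adj_left (by decide) (hfrom 2 (pathπ_two_left h))]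
    norm_num

lemma eca2_pair (hp0 : 0 < p) (hp1 : p ≤ 1) : eca2 p {0, 1} = 2 + 2 * p ^ 2 := by
  have hpath (s t : Fin 3) (hst : s ≠ t) (hπst : pathπ p {0, 1} s t = 0) (l : List (Fin 3))
      (hl : IsPath (fun a b => pathπ p {0, 1} a b ≠ 0) s t l) (hlen : l.length = 3) :
      conn (fun a b => pathπ p {0, 1} a b ≠ 0) (pathπ p {0, 1}) s t = p ^ 2 := by
    rw [conn_eq_pow_of_shortest hp0.le hp1 pathπ_eq_of_ne_zero hl
      (fun _ hl' => hlen.symm ▸ hl'.three_le_length hst (not_not.2 hπst)), hlen]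
  have hne {a b : Fin 3} (hab : a.val + 1 = b.val ∨ b.val + 1 = a.val) :
      pathπ p {0, 1} a b ≠ 0 :=
    pathπ_pair_ne_zero hp0.ne' hab
  rw [eca2_eq_two_add_conn hp0.le hp1,
    hpath 0 2 (by decide) pathπ_pair_zero_two [0, 1, 2]
      ⟨rfl, hne (by decide), rfl, hne (by decide), rfl, rfl⟩ rfl,
    hpath 2 0 (by decide) ((pathπ_comm 2 0).trans pathπ_pair_zero_two) [2, 1, 0]
      ⟨rfl, hne (by decide), rfl, hne (by decide), rfl, rfl⟩ rfl]
  ring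

end PathInstance

/-- Improving two consecutive corridors can produce a super-additive gain in `ECA²`:
on the path `s — u — t` with `w_s = w_t = 1`, `w_u = 0` and both edges of probability `0`
unimproved and `p ∈ (0,1]` improved, the increase of `ECA²` when both edges are improved
simultaneously is `2p²`, while improving either edge alone yields an increase of `0`;
in particular the joint gain strictly exceeds the sum of the individual gains. -/
theorem stmt_16 (p : ℝ) (hp0 : 0 < p) (hp1 : p ≤ 1) :
    eca2 p {0, 1} - eca2 p ∅ = 2 * p ^ 2 ∧
    eca2 p {0} - eca2 p ∅ = 0 ∧
    eca2 p {1} - eca2 p ∅ = 0 ∧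
    eca2 p {0, 1} - eca2 p ∅ > (eca2 p {0} - eca2 p ∅) + (eca2 p {1} - eca2 p ∅) := by
  have hempty : eca2 p ∅ = 2 := eca2_eq_two hp0.le hp1 (Or.inl (Set.notMem_empty _))
  have h0 : eca2 p {0} = 2 := eca2_eq_two hp0.le hp1 (Or.inr (by simp))
  have h1 : eca2 p {1} = 2 := eca2_eq_two hp0.le hp1 (Or.inl (by simp))
  rw [eca2_pair hp0 hp1, hempty, h0, h1]
  refine ⟨by ring, by ring, by ring, by nlinarith⟩
end
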